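/- Let A₁ := −(μ−r)²/(2σ²) − a²η²/(2b²) and v₂(t,x) := ½e^{2A₁(T−t)}(e^{r(T−t)}x + g₁(t))². Then for all (t,x) ∈ (0,T)×ℝ, ∂ₓₓv₂(t,x) = e^{(2A₁+2r)(T−t)} > 0 and ∂ₜv₂(t,x) + (rx + f)·∂ₓv₂(t,x) + A₁·(∂ₓv₂(t,x))²/∂ₓₓv₂(t,x) = 0, with terminal condition v₂(T,x) = ½x². -/

import Mathlib

open Real Set

/-!
Write `v₂ = ½ D u²` with `D(s) = e^{2A₁(T-s)}`, `E(s) = e^{r(T-s)}` and `u(s, x) = E(s) x + g₁(s)`.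
Then `∂ₜu = -E (r x + f)`, so `∂ₜv₂ = -A₁ D u² - (r x + f) ∂ₓv₂`. Since `∂ₓv₂ = D E u` and
`∂ₓₓv₂ = D E²`, the last term `A₁ (∂ₓv₂)² / ∂ₓₓv₂` equals `A₁ D u²` and the equation closes.
-/

lemma hasDerivAt_half_mul_sq_affine (c k m x : ℝ) :
    HasDerivAt (fun y => 1 / 2 * c * (k * y + m) ^ 2) (c * k * (k * x + m)) x := by
  have hlin : HasDerivAt (fun y => k * y + m) k x := by
    simpa using ((hasDerivAt_id x).const_mul k).add_const m
  exact ((hlin.fun_pow 2).const_mul (1 / 2 * c)).congr_deriv (by ring)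

lemma deriv_half_mul_sq_affine (c k m : ℝ) :
    deriv (fun y => 1 / 2 * c * (k * y + m) ^ 2) = fun x => c * k * (k * x + m) :=
  funext fun x => (hasDerivAt_half_mul_sq_affine c k m x).deriv

lemma deriv_deriv_half_mul_sq_affine (c k m x : ℝ) :
    deriv (deriv (fun y => 1 / 2 * c * (k * y + m) ^ 2)) x = c * k ^ 2 := by
  have hlin : HasDerivAt (fun y => k * y + m) k x := by
    simpa using ((hasDerivAt_id x).const_mul k).add_const m
  rw [deriv_half_mul_sq_affine, (hlin.const_mul (c * k)).deriv]
  ring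

lemma HasDerivAt.half_mul_sq {D u : ℝ → ℝ} {D' u' t : ℝ} (hD : HasDerivAt D D' t)
    (hu : HasDerivAt u u' t) :
    HasDerivAt (fun s => 1 / 2 * D s * u s ^ 2)
      (1 / 2 * D' * u t ^ 2 + D t * u t * u') t :=
  ((hD.const_mul (1 / 2)).fun_mul (hu.fun_pow 2)).congr_deriv (by ring)

lemma hasDerivAt_exp_mul_sub (c T t : ℝ) :
    HasDerivAt (fun s => exp (c * (T - s))) (-c * exp (c * (T - t))) t := by
  have hlin : HasDerivAt (fun s => c * (T - s)) (-c) t := by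
    simpa using ((hasDerivAt_id t).const_sub T).const_mul c
  exact hlin.exp.congr_deriv (by ring)

lemma hasDerivAt_exp_mul_sub_mul_add {r : ℝ} (hr : r ≠ 0) (f T x t : ℝ) :
    HasDerivAt (fun s => exp (r * (T - s)) * x + f * (exp (r * (T - s)) - 1) / r)
      (-exp (r * (T - t)) * (r * x + f)) t := by
  have hE := hasDerivAt_exp_mul_sub r T t
  refine ((hE.mul_const x).add (((hE.sub_const 1).const_mul f).div_const r)).congr_deriv ?_
  field_simp
  ring

theorem stmt_6_general
    (T r : ℝ)
    (hr : 0 < r)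
    (f : ℝ)
    (A₁ : ℝ)
    (g₁ : ℝ → ℝ) (hg₁ : ∀ t, g₁ t = f * (exp (r * (T - t)) - 1) / r)
    (v₂ : ℝ → ℝ → ℝ)
    (hv₂ : ∀ t x, v₂ t x
      = (1 / 2) * exp (2 * A₁ * (T - t)) * (exp (r * (T - t)) * x + g₁ t) ^ 2) :
    (∀ t ∈ Ioo (0 : ℝ) T, ∀ x : ℝ,
      deriv (deriv (fun y => v₂ t y)) x = exp ((2 * A₁ + 2 * r) * (T - t)) ∧
      0 < exp ((2 * A₁ + 2 * r) * (T - t)) ∧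
      deriv (fun s => v₂ s x) t
        + (r * x + f) * deriv (fun y => v₂ t y) x
        + A₁ * (deriv (fun y => v₂ t y) x) ^ 2 / deriv (deriv (fun y => v₂ t y)) x = 0) ∧
    (∀ x : ℝ, v₂ T x = (1 / 2) * x ^ 2) := by
  refine ⟨fun t _ x => ?_, fun x => by simp [hv₂, hg₁]⟩
  set D := exp (2 * A₁ * (T - t))
  set E := exp (r * (T - t))
  have hvx : (fun y => v₂ t y) = fun y => 1 / 2 * D * (E * y + g₁ t) ^ 2 := funext (hv₂ t)
  have hxx : deriv (deriv (fun y => v₂ t y)) x = D * E ^ 2 := by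
    rw [hvx, deriv_deriv_half_mul_sq_affine]
  have hDE : D * E ^ 2 = exp ((2 * A₁ + 2 * r) * (T - t)) := by
    rw [← exp_nat_mul, ← exp_add]
    ring_nf
  have ht : HasDerivAt (fun s => v₂ s x)
      (1 / 2 * (-(2 * A₁) * D) * (E * x + g₁ t) ^ 2 + D * (E * x + g₁ t) * (-E * (r * x + f))) t := by
    simp only [hv₂, hg₁]
    exact (hasDerivAt_exp_mul_sub _ T t).half_mul_sq
      (hasDerivAt_exp_mul_sub_mul_add hr.ne' f T x t)
  refine ⟨hxx.trans hDE, exp_pos _, ?_⟩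
  have hD : D ≠ 0 := (exp_pos _).ne'
  have hE : E ≠ 0 := (exp_pos _).ne'
  rw [ht.deriv, hxx, hvx, deriv_half_mul_sq_affine]
  field_simp
  ring

/-- v₂(t,x) = ½e^{2A₁(T−t)}(e^{r(T−t)}x+g₁(t))² satisfies
∂ₓₓv₂ = e^{(2A₁+2r)(T−t)} > 0 and the reduced HJB equation
∂ₜv₂ + (rx+f)∂ₓv₂ + A₁(∂ₓv₂)²/∂ₓₓv₂ = 0 on (0,T)×ℝ, with v₂(T,x) = ½x². -/
theorem stmt_6
    (T r μ σ a b η θ d γ : ℝ)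
    (hT : 0 < T) (hr : 0 < r) (hσ : 0 < σ) (ha : 0 < a) (hb : 0 < b)
    (hη : 0 < η) (hμr : r < μ)
    (f : ℝ) (hf : f = a * θ - a * η + (d - γ) * r)
    (A₁ : ℝ) (hA₁ : A₁ = -(μ - r) ^ 2 / (2 * σ ^ 2) - a ^ 2 * η ^ 2 / (2 * b ^ 2))
    (g₁ : ℝ → ℝ) (hg₁ : ∀ t, g₁ t = f * (exp (r * (T - t)) - 1) / r)
    (v₂ : ℝ → ℝ → ℝ)
    (hv₂ : ∀ t x, v₂ t x
      = (1 / 2) * exp (2 * A₁ * (T - t)) * (exp (r * (T - t)) * x + g₁ t) ^ 2) :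
    (∀ t ∈ Ioo (0 : ℝ) T, ∀ x : ℝ,
      deriv (deriv (fun y => v₂ t y)) x = exp ((2 * A₁ + 2 * r) * (T - t)) ∧
      0 < exp ((2 * A₁ + 2 * r) * (T - t)) ∧
      deriv (fun s => v₂ s x) t
        + (r * x + f) * deriv (fun y => v₂ t y) x
        + A₁ * (deriv (fun y => v₂ t y) x) ^ 2 / deriv (deriv (fun y => v₂ t y)) x = 0) ∧
    (∀ x : ℝ, v₂ T x = (1 / 2) * x ^ 2) :=
  stmt_6_general T r hr f A₁ g₁ hg₁ v₂ hv₂
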